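/- arXiv:2407.20310 — 2 statements merged into one kernel-verified Lean document; each statement's English description precedes it below -/
import Mathlib

section
/- Let η, σ > 1, k ≥ 1, γ ∈ [1,2), and set ε = η^{-γk}, δ = η^{k(γ−2)}, β = η^{k(2−γ)}σ^{-2k}, c = 1/√(1+δ²). Define the matrices L(ε) = [[1,0],[ε,1]], R(δ) = c·[[1,−δ],[δ,1]], L(β) = [[1,0],[β,1]], D_η = diag(η^{-1}, η), D_σ = diag(σ, σ^{-1}). Then D_σ · L(β) · D_σ^k · R(δ) · D_η^k · L(ε) = c·[[0, −η^k σ^{k+1} δ],[η^k σ^{-k-1}(η^{-2k}δ + ε), 0]]. -/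
open Real Filter MeasureTheory

/-- The space `M = {0,1}^ℤ` of bi-infinite binary sequences. -/
abbrev Mspace : Type := ℤ → Bool

/-- `N(x,y) = sup {N ≥ 0 : x_n = y_n for all |n| < N}`. -/
noncomputable def sep (x y : Mspace) : ℕ := sSup {N : ℕ | ∀ n : ℤ, |n| < (N : ℤ) → x n = y n}

open scoped Classical in
/-- The metric `d(x,y) = 2^{-N(x,y)}` (with `d(x,x) = 0`, as `N(x,x) = ∞`). -/
noncomputable def dd (x y : Mspace) : ℝ := if x = y then 0 else (2 : ℝ) ^ (-(sep x y : ℤ))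

/-- The left shift map on `M`. -/
def shift (x : Mspace) : Mspace := fun n => x (n + 1)

/-- The Euclidean operator norm of a `2 × 2` real matrix. -/
noncomputable def opn (M : Matrix (Fin 2) (Fin 2) ℝ) : ℝ :=
  ‖Matrix.toEuclideanCLM (𝕜 := ℝ) M‖

abbrev SL2 : Type := Matrix.SpecialLinearGroup (Fin 2) ℝ

lemma diag_pow' (a b : ℝ) (k : ℕ) : (!![a,0;0,b])^k = !![a^k,0;0,b^k] := by
  induction k with
  | zero => simp [Matrix.one_fin_two]
  | succ n ih => rw [pow_succ, ih, pow_succ, pow_succ]; ext i j; fin_cases i <;> fin_cases j <;>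
      simp [Matrix.mul_apply, Fin.sum_univ_two]

/-- the `n`-step product of the perturbed cocycle on the cylinder `Z_n`:
`D_σ · L(β) · D_σ^k · (c R(δ)) · D_η^k · L(ε)` equals the antidiagonal matrix
`c·[[0, -η^k σ^{k+1} δ],[η^k σ^{-k-1}(η^{-2k} δ + ε), 0]]`. -/
theorem stmt7 (η σ γ : ℝ) (k : ℕ) (hη : 1 < η) (hσ : 1 < σ) (hk : 1 ≤ k)
    (hγ1 : 1 ≤ γ) (hγ2 : γ < 2)
    (ε δ β c : ℝ)
    (hε : ε = η ^ (-(γ * (k : ℝ))))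
    (hδ : δ = η ^ ((k : ℝ) * (γ - 2)))
    (hβ : β = η ^ ((k : ℝ) * (2 - γ)) * (σ ^ (2 * k))⁻¹)
    (hc : c = 1 / Real.sqrt (1 + δ ^ 2)) :
    !![σ, 0; 0, σ⁻¹] * !![1, 0; β, 1] * (!![σ, 0; 0, σ⁻¹]) ^ k *
        (c • !![1, -δ; δ, 1]) * (!![η⁻¹, 0; 0, η]) ^ k * !![1, 0; ε, 1] =
      c • !![0, -(η ^ k * σ ^ (k + 1) * δ);
             η ^ k * (σ ^ (k + 1))⁻¹ * ((η ^ (2 * k))⁻¹ * δ + ε), 0] := by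
  have hη0 : (0:ℝ) < η := lt_trans one_pos hη
  have hσ0 : (0:ℝ) < σ := lt_trans one_pos hσ
  have h1 : δ * ε = (η ^ (2*k) : ℝ)⁻¹ := by
    rw [hδ, hε, ← Real.rpow_add hη0]
    have he : ((k:ℝ) * (γ - 2) + -(γ * (k:ℝ))) = -(2*(k:ℝ)) := by ring
    rw [he, Real.rpow_neg hη0.le, ← Real.rpow_natCast η (2*k)]
    push_cast; ring_nf
  have h2 : β * δ = (σ^(2*k) : ℝ)⁻¹ := by
    rw [hβ, hδ, mul_right_comm, ← Real.rpow_add hη0]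
    have he : ((k:ℝ) * (2 - γ) + (k:ℝ) * (γ - 2)) = 0 := by ring
    rw [he, Real.rpow_zero, one_mul]
  have hne : η ≠ 0 := hη0.ne'
  have hsne : σ ≠ 0 := hσ0.ne'
  have hek : η ^ k ≠ 0 := pow_ne_zero _ hne
  have hsk : σ ^ k ≠ 0 := pow_ne_zero _ hsne
  have hpη : η ^ (2*k) = η ^ k * η ^ k := by rw [two_mul, pow_add]
  have hpσ : σ ^ (2*k) = σ ^ k * σ ^ k := by rw [two_mul, pow_add]
  have h1'' : δ * ε * (η ^ k * η ^ k) = 1 := by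
    rw [h1, hpη]; field_simp
  have h2'' : β * δ * (σ ^ k * σ ^ k) = 1 := by
    rw [h2, hpσ]; field_simp
  have hδ0 : δ ≠ 0 := by rw [hδ]; positivity
  have hεe : ε = (η ^ k * η ^ k * δ)⁻¹ := by
    refine eq_inv_of_mul_eq_one_left ?_
    linear_combination h1''
  have hβe : β = (σ ^ k * σ ^ k * δ)⁻¹ := by
    refine eq_inv_of_mul_eq_one_left ?_
    linear_combination h2''
  rw [diag_pow', diag_pow']
  ext i j
  fin_cases i <;> fin_cases j <;>
    simp [Matrix.mul_apply, Fin.sum_univ_two, inv_pow] <;> ring_nf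
  · rw [hεe]; simp only [inv_pow]; field_simp; ring
  · rw [hεe, hβe]; simp only [inv_pow]; field_simp; ring
  · left; rw [hβe]; simp only [inv_pow]; field_simp; ring
end

section
/- The cocycle A_{ση} (equal to diag(η^{-1},η) when x_0 = 0 and diag(σ,σ^{-1}) when x_0 = 1, with 1 < η < σ) is α-fiber-bunched if and only if σ² < 2^α, i.e., there exists N > 0 such that ‖A^N(x)‖·‖(A^N(x))^{-1}‖ < 2^{αN} for all x ∈ M if and only if σ² < 2^α. -/
open Real Filter MeasureTheory

/-- The generator `A_{ση}` of the locally constant cocycle. -/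
noncomputable def Ase (σ η : ℝ) (x : Mspace) : Matrix (Fin 2) (Fin 2) ℝ :=
  if x 0 then !![σ, 0; 0, σ⁻¹] else !![η⁻¹, 0; 0, η]

/-- The cocycle iterates `A^n(x) = A(f^{n-1}(x)) ⋯ A(x)`. -/
noncomputable def AseIter (σ η : ℝ) : ℕ → Mspace → Matrix (Fin 2) (Fin 2) ℝ
  | 0, _ => 1
  | n + 1, x => Ase σ η (shift^[n] x) * AseIter σ η n x

/-!
Every iterate of the cocycle is a diagonal matrix `diag(a, a⁻¹)`, whose norm and co-norm are both
`max |a| |a⁻¹|`, so `‖A‖‖A⁻¹‖ = max |a| |a⁻¹| ^ 2`. Along the fixed point `(…,1,1,1,…)` this is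
`σ^{2N}`, which forces `σ² < 2^α`. Conversely, if `σ² < 2^α` then already `N = 1` works, since
`A(x)` has condition number `σ²` or `η² < σ²`.
-/

open Matrix

lemma opn_diagonal (v : Fin 2 → ℝ) : opn (diagonal v) = ‖v‖ := by
  open scoped Matrix.Norms.L2Operator in exact l2_opNorm_diagonal v

lemma norm_vec2_eq_max (a b : ℝ) : ‖![a, b]‖ = max |a| |b| := by
  refine le_antisymm ((pi_norm_le_iff_of_nonneg (by positivity)).2 fun i => ?_)
    (max_le (norm_le_pi_norm ![a, b] 0) (norm_le_pi_norm ![a, b] 1))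
  fin_cases i <;> simp

lemma opn_mul_opn_inv_diag_of_mul_eq_one {a b : ℝ} (hab : a * b = 1) :
    opn !![a, 0; 0, b] * opn !![a, 0; 0, b]⁻¹ = max |a| |b| ^ 2 := by
  have hinv : (!![a, 0; 0, b])⁻¹ = diagonal ![b, a] := by
    refine inv_eq_left_inv ?_
    rw [← diagonal_vec2, diagonal_mul_diagonal, ← diagonal_one]
    congr 1
    ext i; fin_cases i <;> simp [hab, mul_comm b a]
  rw [hinv, ← diagonal_vec2, opn_diagonal, opn_diagonal, norm_vec2_eq_max, norm_vec2_eq_max,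
    max_comm |b|, sq]

lemma max_abs_abs_inv_of_one_le {a : ℝ} (ha : 1 ≤ a) : max |a| |a⁻¹| = a := by
  rw [abs_of_nonneg (by positivity : 0 ≤ a), abs_of_nonneg (by positivity : 0 ≤ a⁻¹)]
  exact max_eq_left ((inv_le_one_of_one_le₀ ha).trans ha)

lemma AseIter_one (σ η : ℝ) (x : Mspace) : AseIter σ η 1 x = Ase σ η x := by
  simp [AseIter]

lemma AseIter_const_true (σ η : ℝ) (N : ℕ) :
    AseIter σ η N (fun _ => true) = !![σ ^ N, 0; 0, σ⁻¹ ^ N] := by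
  induction N with
  | zero => simp [AseIter, one_fin_two]
  | succ n ih =>
    rw [AseIter, ih, Function.iterate_fixed (rfl : shift (fun _ => true) = _)]
    simp [Ase, pow_succ, mul_comm]

lemma opn_Ase_mul_opn_inv_lt {σ η α : ℝ} (hη : 1 < η) (hησ : η < σ) (hσ : σ ^ 2 < (2 : ℝ) ^ α)
    (x : Mspace) : opn (Ase σ η x) * opn (Ase σ η x)⁻¹ < (2 : ℝ) ^ α := by
  have hσ1 : 1 ≤ σ := (hη.trans hησ).le
  by_cases hx : x 0
  · rw [Ase, if_pos hx, opn_mul_opn_inv_diag_of_mul_eq_one (mul_inv_cancel₀ (by positivity)),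
      max_abs_abs_inv_of_one_le hσ1]
    exact hσ
  · rw [Ase, if_neg hx, opn_mul_opn_inv_diag_of_mul_eq_one (inv_mul_cancel₀ (by positivity)),
      max_comm, max_abs_abs_inv_of_one_le hη.le]
    exact lt_of_le_of_lt (pow_le_pow_left₀ (by positivity) hησ.le 2) hσ

lemma sq_pow_le_opn_AseIter_const_mul_opn_inv {σ : ℝ} (η : ℝ) (hσ : σ ≠ 0) (N : ℕ) :
    (σ ^ 2) ^ N ≤
      opn (AseIter σ η N (fun _ => true)) * opn (AseIter σ η N (fun _ => true))⁻¹ := by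
  have hdet : σ ^ N * σ⁻¹ ^ N = 1 := by rw [← mul_pow, mul_inv_cancel₀ hσ, one_pow]
  rw [AseIter_const_true, opn_mul_opn_inv_diag_of_mul_eq_one hdet, ← pow_mul, mul_comm, pow_mul,
    ← sq_abs (σ ^ N)]
  exact pow_le_pow_left₀ (abs_nonneg _) (le_max_left _ _) 2

theorem stmt19_general (σ η α : ℝ) (hη : 1 < η) (hησ : η < σ) :
    (∃ N : ℕ, 0 < N ∧ ∀ x : Mspace,
        opn (AseIter σ η N x) * opn ((AseIter σ η N x)⁻¹) < (2 : ℝ) ^ (α * N)) ↔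
      σ ^ 2 < (2 : ℝ) ^ α := by
  constructor
  · rintro ⟨N, -, h⟩
    refine lt_of_pow_lt_pow_left₀ N (by positivity) ?_
    calc (σ ^ 2) ^ N ≤ _ := sq_pow_le_opn_AseIter_const_mul_opn_inv η (by linarith) N
      _ < (2 : ℝ) ^ (α * N) := h _
      _ = ((2 : ℝ) ^ α) ^ N := by rw [Real.rpow_mul (by norm_num), Real.rpow_natCast]
  · intro hσ
    refine ⟨1, one_pos, fun x => ?_⟩
    rw [AseIter_one, Nat.cast_one, mul_one]
    exact opn_Ase_mul_opn_inv_lt hη hησ hσ x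

/-- the cocycle `A_{ση}` (with `1 < η < σ`) is `α`-fiber-bunched iff
`σ² < 2^α`. -/
theorem stmt19 (σ η α : ℝ) (hη : 1 < η) (hησ : η < σ) (hα : 0 < α) :
    (∃ N : ℕ, 0 < N ∧ ∀ x : Mspace,
        opn (AseIter σ η N x) * opn ((AseIter σ η N x)⁻¹) < (2 : ℝ) ^ (α * N)) ↔
      σ ^ 2 < (2 : ℝ) ^ α :=
  stmt19_general σ η α hη hησ
end
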